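/- arXiv:2503.21441 — 4 statements merged into one kernel-verified Lean document; each statement's English description precedes it below -/
import Mathlib

section
/- Let G = (V,E) be a graph, let U, W ⊆ V be nonempty, and let m > 0. If |E(U,W)| ≥ m, then there exists a real number d with m/(2|U|) ≤ d ≤ |W| such that the number of vertices u ∈ U with more than d neighbours in W is at least m/(4·d·log(2|U||W|/m)). -/
open Finset

variable {V : Type*}

/-- Number of edges of `G` with both endpoints in `S` (i.e. edges of the induced subgraph `G[S]`). -/
noncomputable def edgesIn (G : SimpleGraph V) (S : Finset V) : ℕ :=
  {e ∈ G.edgeSet | ∀ v ∈ e, v ∈ S}.ncard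

/-- Number of edges of `G` with one endpoint in `S` and one endpoint in `T`. -/
noncomputable def edgesBetween (G : SimpleGraph V) (S T : Finset V) : ℕ :=
  {e : Sym2 V | e ∈ G.edgeSet ∧ ∃ u v, e = s(u, v) ∧ u ∈ S ∧ v ∈ T}.ncard

/-- Degree of `v` in the induced subgraph `G[S]`, i.e. `|N(v) ∩ S|`. -/
noncomputable def degIn (G : SimpleGraph V) (S : Finset V) (v : V) : ℕ :=
  ((S : Set V) ∩ G.neighborSet v).ncard

/-- `S_{↑v}`: the vertices of `S` with strictly more neighbours in `S` than `v` has. -/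
def upSet (G : SimpleGraph V) (S : Finset V) (v : V) : Set V :=
  {u | u ∈ S ∧ degIn G S v < degIn G S u}

/-- The maximum removal ratio `MRR_G(J, C)` with parameters `ε, ρ, ℓ`. -/
noncomputable def MRR [DecidableEq V] (G : SimpleGraph V) (ε ρ ℓ : ℝ) (J C : Finset V) : ℝ :=
  sSup {x : ℝ | ∃ v ∈ J, x = max
    ((degIn G (insert v C) v : ℝ) /
      max (degIn G J v : ℝ) (ε / (Real.sqrt ℓ * ρ ^ 2) * J.card))
    (((upSet G C v).ncard : ℝ) /
      max (((upSet G C v) ∩ (J : Set V)).ncard : ℝ) (ε / (Real.sqrt ℓ * ρ ^ 2) * J.card))}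

/-- `G` is `ε`-far from having a `ρn` independent set: every set of `ρn` vertices
spans at least `ε n²` edges. -/
def FarFrom (G : SimpleGraph V) [Fintype V] (ρ ε : ℝ) : Prop :=
  ∀ U : Finset V, (U.card : ℝ) = ρ * Fintype.card V →
    ε * (Fintype.card V : ℝ) ^ 2 ≤ (edgesIn G U : ℝ)

/-!
Write `N(d)` for the number of `u ∈ U` with more than `d` neighbours in `W`, and suppose
`N(d) < K / d` on `[d₀, |W|]`, where `d₀ = m / (2|U|)`, `L = log₂ (|W| / d₀)` and
`K = m / (4L)`. Counting degrees by layers, `∑_{u ∈ U} |N(u) ∩ W| = ∑_{t < |W|} N(t)`.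
The layers below `d₀` contribute at most `|U| d₀ = m / 2`. Since degrees are integers,
`N(t) = N(s)` for `s ∈ [t, t + 1)`, so letting `s → t + 1` gives `N(t) ≤ K / (t + 1)`, and the
remaining layers contribute at most `K (1 + ln (|W| / d₀)) = m / (4L) + (m ln 2) / 4 < m / 2`.
Hence the degree sum is below `m ≤ |E(U, W)|`, a contradiction.
-/

open Filter

lemma le_div_of_forall_Ico_lt_div {c K lo hi : ℝ} (hlo : lo < hi) (hhi : 0 < hi)
    (h : ∀ s ∈ Set.Ico lo hi, c < K / s) : c ≤ K / hi :=
  ge_of_tendsto ((continuousAt_const.div continuousAt_id hhi.ne').tendsto.mono_left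
    nhdsWithin_le_nhds) (eventually_of_mem (Ico_mem_nhdsLT hlo) fun s hs => (h s hs).le)

lemma sum_Ico_inv_succ_le_one_add_log {k w : ℕ} (hkw : k ≤ w) :
    ∑ t ∈ Ico k w, ((t : ℝ) + 1)⁻¹ ≤ 1 + Real.log w - Real.log (k + 1) := by
  have hH : ∀ n, ∑ t ∈ range n, ((t : ℝ) + 1)⁻¹ = harmonic n := fun n => by simp [harmonic]
  have hsplit := sum_range_add_sum_Ico (fun t : ℕ => ((t : ℝ) + 1)⁻¹) hkw
  have hlow := log_add_one_le_harmonic k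
  push_cast at hlow
  linarith [harmonic_le_one_add_log w, hH w, hH k]

section Layers

variable {ι : Type*} {U : Finset ι} {f : ι → ℕ} {w : ℕ}

lemma sum_eq_sum_range_card_filter_lt (hf : ∀ u ∈ U, f u ≤ w) :
    ∑ u ∈ U, f u = ∑ t ∈ range w, #{u ∈ U | t < f u} := by
  simp_rw [card_filter]
  rw [sum_comm]
  refine sum_congr rfl fun u hu => ?_
  rw [← card_filter, range_eq_Ico, Ico_filter_lt, Nat.card_Ico, min_eq_right (hf u hu)]
  rfl

lemma card_filter_lt_le_div_succ {D K : ℝ} {t : ℕ} (hDt : D < t + 1) (htw : t < w)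
    (H : ∀ d : ℝ, D ≤ d → d ≤ w → (#{u ∈ U | d < f u} : ℝ) < K / d) :
    (#{u ∈ U | t < f u} : ℝ) ≤ K / (t + 1) := by
  refine le_div_of_forall_Ico_lt_div (lo := max t D) (max_lt (by linarith) hDt)
    (by positivity) fun s ⟨hts, hst⟩ => ?_
  have hlayer : #{u ∈ U | s < f u} = #{u ∈ U | t < f u} := by
    refine congrArg card (filter_congr fun u _ => ⟨fun h => ?_, fun h => ?_⟩)
    · exact_mod_cast (le_of_max_le_left hts).trans_lt h
    · exact hst.trans_le (by exact_mod_cast h)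
  rw [← hlayer]
  exact H s (le_of_max_le_right hts) (hst.le.trans (by exact_mod_cast htw))

lemma sum_le_of_card_filter_lt_div {D K : ℝ} (hD : 0 < D) (hDw : D < w)
    (hf : ∀ u ∈ U, f u ≤ w)
    (H : ∀ d : ℝ, D ≤ d → d ≤ w → (#{u ∈ U | d < f u} : ℝ) < K / d) :
    (∑ u ∈ U, f u : ℝ) ≤ #U * D + K * (1 + Real.log (w / D)) := by
  have hK : 0 < K := (div_pos_iff_of_pos_right hD).1 ((Nat.cast_nonneg _).trans_lt
    (H D le_rfl hDw.le))
  set k := ⌊D⌋₊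
  have hkD : (k : ℝ) ≤ D := Nat.floor_le hD.le
  have hDk : D < k + 1 := Nat.lt_floor_add_one D
  have hkw : k < w := by exact_mod_cast hkD.trans_lt hDw
  have hlow : ∑ t ∈ range k, (#{u ∈ U | t < f u} : ℝ) ≤ #U * D :=
    calc ∑ t ∈ range k, (#{u ∈ U | t < f u} : ℝ) ≤ ∑ _t ∈ range k, (#U : ℝ) :=
          sum_le_sum fun t _ => by exact_mod_cast card_filter_le _ _
      _ = #U * k := by rw [sum_const, card_range, nsmul_eq_mul, mul_comm]
      _ ≤ #U * D := by gcongr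
  have hhigh : ∑ t ∈ Ico k w, (#{u ∈ U | t < f u} : ℝ) ≤ K * (1 + Real.log (w / D)) :=
    calc ∑ t ∈ Ico k w, (#{u ∈ U | t < f u} : ℝ) ≤ ∑ t ∈ Ico k w, K * ((t : ℝ) + 1)⁻¹ :=
          sum_le_sum fun t ht => (card_filter_lt_le_div_succ
            (hDk.trans_le (by gcongr; exact_mod_cast (mem_Ico.1 ht).1)) (mem_Ico.1 ht).2 H)
      _ = K * ∑ t ∈ Ico k w, ((t : ℝ) + 1)⁻¹ := by rw [mul_sum]
      _ ≤ K * (1 + Real.log w - Real.log (k + 1)) := by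
          gcongr; exact sum_Ico_inv_succ_le_one_add_log hkw.le
      _ ≤ K * (1 + Real.log (w / D)) := by
          rw [Real.log_div (hD.trans hDw).ne' hD.ne']
          exact mul_le_mul_of_nonneg_left (by linarith [Real.log_le_log hD hDk.le]) hK.le
  have hlayers : (∑ u ∈ U, f u : ℝ) = ∑ t ∈ range k, (#{u ∈ U | t < f u} : ℝ) +
      ∑ t ∈ Ico k w, (#{u ∈ U | t < f u} : ℝ) := by
    rw [sum_range_add_sum_Ico _ hkw.le]
    exact_mod_cast sum_eq_sum_range_card_filter_lt hf
  linarith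

theorem exists_card_filter_lt_ge_div_logb {m : ℝ} (hm : 0 < m) (hf : ∀ u ∈ U, f u ≤ w)
    (hsum : m ≤ ∑ u ∈ U, (f u : ℝ)) :
    ∃ d : ℝ, m / (2 * #U) ≤ d ∧ d ≤ w ∧
      m / (4 * d * Real.logb 2 (2 * #U * w / m)) ≤ #{u ∈ U | d < f u} := by
  have hUw : m ≤ #U * w := by
    refine hsum.trans ?_
    simpa using sum_le_card_nsmul U (fun u => (f u : ℝ)) w fun u hu => by exact_mod_cast hf u hu
  have hw : (0 : ℝ) < w := pos_of_mul_pos_right (hm.trans_le hUw) (Nat.cast_nonneg _)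
  have hU : (0 : ℝ) < #U := pos_of_mul_pos_left (hm.trans_le hUw) hw.le
  set D := m / (2 * #U) with hD_def
  set L := Real.logb 2 (2 * #U * w / m) with hL_def
  have hD : 0 < D := by positivity
  have hDw : D < w := by rw [div_lt_iff₀ (by positivity)]; nlinarith
  have hratio : 2 * #U * w / m = w / D := by rw [hD_def]; field_simp
  have hL : 1 ≤ L := by
    rw [← Real.logb_self_eq_one one_lt_two]
    exact Real.logb_le_logb_of_le one_lt_two two_pos (by rw [le_div_iff₀ hm]; linarith)
  have hlog : Real.log (w / D) = L * Real.log 2 := by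
    rw [← hratio, hL_def, Real.logb, div_mul_cancel₀ _ (Real.log_pos one_lt_two).ne']
  by_contra! H
  have hbound := sum_le_of_card_filter_lt_div (K := m / (4 * L)) hD hDw hf
    fun d h1 h2 => (H d h1 h2).trans_eq (by ring)
  have hUD : #U * D = m / 2 := by rw [hD_def]; field_simp
  have hKL : m / (4 * L) * (1 + L * Real.log 2) = m / (4 * L) + m / 4 * Real.log 2 := by
    field_simp
  have hK : m / (4 * L) ≤ m / 4 := div_le_div_of_nonneg_left hm.le (by norm_num) (by linarith)
  have hlog2 : m / 4 * Real.log 2 < m / 4 :=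
    mul_lt_of_lt_one_right (by positivity) (by linarith [Real.log_two_lt_d9])
  rw [hUD, hlog, hKL] at hbound
  linarith

end Layers

section Graph

variable (G : SimpleGraph V)

lemma degIn_eq_card_filter [DecidableRel G.Adj] (S : Finset V) (v : V) :
    degIn G S v = #{w ∈ S | G.Adj v w} := by
  rw [degIn, ← Set.ncard_coe_finset, coe_filter]
  rfl

lemma degIn_le_card (S : Finset V) (v : V) : degIn G S v ≤ #S := by
  classical
  exact (degIn_eq_card_filter G S v).trans_le (card_filter_le _ _)

lemma edgesBetween_le_sum_degIn [DecidableRel G.Adj] [DecidableEq V] (U W : Finset V) :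
    edgesBetween G U W ≤ ∑ u ∈ U, degIn G W u :=
  calc edgesBetween G U W
      ≤ #({p ∈ U ×ˢ W | G.Adj p.1 p.2}.image fun p => s(p.1, p.2)) := by
        rw [edgesBetween, ← Set.ncard_coe_finset]
        refine Set.ncard_le_ncard ?_ (finite_toSet _)
        rintro e ⟨he, u, v, rfl, hu, hv⟩
        simp only [coe_image, coe_filter, mem_product]
        exact ⟨(u, v), ⟨⟨hu, hv⟩, he⟩, rfl⟩
    _ ≤ #{p ∈ U ×ˢ W | G.Adj p.1 p.2} := card_image_le
    _ = ∑ u ∈ U, degIn G W u := by simp only [degIn_eq_card_filter, card_filter, sum_product]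

end Graph

theorem degree_threshold_existence_general (G : SimpleGraph V) (U W : Finset V) (m : ℝ)
    (hm : 0 < m) (hE : (edgesBetween G U W : ℝ) ≥ m) :
    ∃ d : ℝ, m / (2 * U.card) ≤ d ∧ d ≤ W.card ∧
      ({u ∈ (U : Set V) | d < (degIn G W u : ℝ)}.ncard : ℝ) ≥
        m / (4 * d * Real.logb 2 (2 * U.card * W.card / m)) := by
  classical
  have hsum : m ≤ ∑ u ∈ U, (degIn G W u : ℝ) :=
    hE.trans (by exact_mod_cast edgesBetween_le_sum_degIn G U W)
  obtain ⟨d, hd, hdW, hcount⟩ :=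
    exists_card_filter_lt_ge_div_logb hm (fun u _ => degIn_le_card G W u) hsum
  have hset : {u ∈ (U : Set V) | d < (degIn G W u : ℝ)} = ↑{u ∈ U | d < (degIn G W u : ℝ)} := by
    simp
  exact ⟨d, hd, hdW, by rwa [hset, Set.ncard_coe_finset]⟩

theorem degree_threshold_existence [Fintype V] (G : SimpleGraph V) (U W : Finset V) (m : ℝ)
    (hU : U.Nonempty) (hW : W.Nonempty) (hm : 0 < m)
    (hE : (edgesBetween G U W : ℝ) ≥ m) :
    ∃ d : ℝ, m / (2 * U.card) ≤ d ∧ d ≤ W.card ∧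
      ({u ∈ (U : Set V) | d < (degIn G W u : ℝ)}.ncard : ℝ) ≥
        m / (4 * d * Real.logb 2 (2 * U.card * W.card / m)) :=
  degree_threshold_existence_general G U W m hm hE
end

section
/- Let ε, ρ > 0 and ℓ ≥ 16, let G = (V,E) be a graph, let J ⊆ V be a nonempty set such that G[J] has fewer than (ε/(ℓρ²))·|J|² edges, let D ⊆ V, and let r, M > 0 be reals such that MRR_G(J,D) ≤ r·M/|J|. Then for every real d ≥ ε·r·M/(√ℓ·ρ²), the number of vertices v ∈ J that have more than d neighbours in D is at most 2·ε·r·M·|J|/(d·ℓ·ρ²). -/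
open Finset

variable {V : Type*}

/-! A vertex `v ∈ J` with more than `d` neighbours in `D` makes the first ratio in `MRR` large;
since `d ≥ ε r M / (√ℓ ρ²)`, its denominator cannot be the floor `ε |J| / (√ℓ ρ²)`, so
`deg_{G[J]}(v) > d |J| / (r M)`. Summing over these vertices and applying the handshake lemma in
`G[J]`, their number times `d |J| / (r M)` is below `2 |E(J)| < 2 ε |J|² / (ℓ ρ²)`. -/

open SimpleGraph

section Degrees

variable (G : SimpleGraph V)

theorem degIn_mono {S T : Finset V} (h : S ⊆ T) (v : V) : degIn G S v ≤ degIn G T v :=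
  Set.ncard_le_ncard (Set.inter_subset_inter_left _ (Finset.coe_subset.mpr h))
    (T.finite_toSet.inter_of_left _)

theorem degIn_eq_degree_induce (J : Finset V) (v : (J : Set V))
    [Fintype ((G.induce (J : Set V)).neighborSet v)] :
    degIn G J v = (G.induce (J : Set V)).degree v := by
  rw [← card_neighborSet_eq_degree, ← Nat.card_eq_fintype_card, Nat.card_coe_set_eq, degIn,
    ← Set.ncard_image_of_injective _ Subtype.val_injective]
  congr 1
  ext w
  simp [and_comm]

theorem edgesIn_eq_ncard_edgeSet_induce (J : Finset V) :
    edgesIn G J = (G.induce (J : Set V)).edgeSet.ncard := by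
  rw [edgesIn, ← Set.ncard_image_of_injective _
    (Function.Embedding.subtype (· ∈ (J : Set V))).sym2Map.injective]
  congr 1
  aesop (add simp [Set.ext_iff, Sym2.exists, Sym2.forall, adj_comm])

theorem sum_degIn_eq_two_mul_edgesIn (J : Finset V) :
    ∑ v ∈ J, degIn G J v = 2 * edgesIn G J := by
  classical
  rw [edgesIn_eq_ncard_edgeSet_induce, ← coe_edgeFinset, Set.ncard_coe_finset,
    ← sum_degrees_eq_twice_card_edges, ← Finset.sum_coe_sort J]
  exact Finset.sum_congr rfl fun v _ => degIn_eq_degree_induce G J v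

variable {G} {J C : Finset V}

theorem card_filter_lt_degIn_mul_le {d K : ℝ} (hK : 0 ≤ K)
    (h : ∀ v ∈ J, d < degIn G C v → d < K * degIn G J v) :
    #{v ∈ J | d < (degIn G C v : ℝ)} * d ≤ K * (2 * edgesIn G J) := by
  calc #{v ∈ J | d < (degIn G C v : ℝ)} * d
      ≤ ∑ v ∈ J with d < (degIn G C v : ℝ), K * degIn G J v := by
        rw [← nsmul_eq_mul]
        refine Finset.card_nsmul_le_sum _ _ _ fun v hv => ?_
        rw [Finset.mem_filter] at hv
        exact (h v hv.1 hv.2).le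
    _ ≤ ∑ v ∈ J, K * degIn G J v :=
        Finset.sum_le_sum_of_subset_of_nonneg (Finset.filter_subset _ _)
          fun _ _ _ => by positivity
    _ = K * (2 * edgesIn G J) := by
        rw [← Finset.mul_sum]
        exact_mod_cast congrArg (K * ·) (congrArg Nat.cast (sum_degIn_eq_two_mul_edgesIn G J))

end Degrees

section RemovalRatio

variable [DecidableEq V] {G : SimpleGraph V} {ε ρ ℓ : ℝ} {J C : Finset V}

theorem degIn_insert_div_le_MRR {v : V} (hv : v ∈ J) :
    (degIn G (insert v C) v : ℝ) / max (degIn G J v : ℝ) (ε / (Real.sqrt ℓ * ρ ^ 2) * #J)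
      ≤ MRR G ε ρ ℓ J C := by
  refine (le_max_left _ _).trans (le_csSup ?_ ⟨v, hv, rfl⟩)
  apply Set.Finite.bddAbove
  apply (J.finite_toSet.image _).subset
  rintro x ⟨w, hw, rfl⟩
  exact ⟨w, hw, rfl⟩

theorem lt_mul_degIn_of_MRR_le {K d : ℝ} (hK : 0 ≤ K) (hMRR : MRR G ε ρ ℓ J C ≤ K)
    (hfloor : 0 < ε / (Real.sqrt ℓ * ρ ^ 2) * #J)
    (hd : K * (ε / (Real.sqrt ℓ * ρ ^ 2) * #J) ≤ d) {v : V} (hv : v ∈ J)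
    (hdv : d < degIn G C v) : d < K * degIn G J v := by
  have hden : 0 < max (degIn G J v : ℝ) (ε / (Real.sqrt ℓ * ρ ^ 2) * #J) :=
    hfloor.trans_le (le_max_right _ _)
  have hC : (degIn G C v : ℝ) ≤ degIn G (insert v C) v := by
    exact_mod_cast degIn_mono G (Finset.subset_insert v C) v
  have hbound := (div_le_iff₀ hden).mp ((degIn_insert_div_le_MRR hv).trans hMRR)
  rw [mul_max_of_nonneg _ _ hK] at hbound
  rcases lt_max_iff.mp ((hdv.trans_le hC).trans_le hbound) with h | h
  · exact h
  · exact absurd hd h.not_ge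

end RemovalRatio

theorem high_degree_vertex_count_general [DecidableEq V]
    (G : SimpleGraph V) (ε ρ ℓ r M : ℝ)
    (hε : 0 < ε) (hρ : 0 < ρ) (hℓ : ℓ ≥ 16)
    (J : Finset V) (hJne : J.Nonempty)
    (hJ : (edgesIn G J : ℝ) < ε / (ℓ * ρ ^ 2) * (J.card : ℝ) ^ 2)
    (D : Finset V) (hr : 0 < r) (hM : 0 < M)
    (hMRR : MRR G ε ρ ℓ J D ≤ r * M / J.card) :
    ∀ d : ℝ, d ≥ ε * r * M / (Real.sqrt ℓ * ρ ^ 2) →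
      ({v ∈ (J : Set V) | d < (degIn G D v : ℝ)}.ncard : ℝ) ≤
        2 * ε * r * M * J.card / (d * ℓ * ρ ^ 2) := by
  classical
  intro d hd
  have hℓ : 0 < ℓ := by linarith
  have hJ0 : (0 : ℝ) < #J := by exact_mod_cast hJne.card_pos
  have hK : 0 < r * M / #J := by positivity
  have hKfloor : r * M / #J * (ε / (Real.sqrt ℓ * ρ ^ 2) * #J) ≤ d := by
    convert hd using 1
    field_simp
  have hd0 : 0 < d := lt_of_lt_of_le (by positivity) hKfloor
  have hcount := card_filter_lt_degIn_mul_le hK.le fun v hv hdv =>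
    lt_mul_degIn_of_MRR_le hK.le hMRR (by positivity) hKfloor hv hdv
  have hset : {v ∈ (J : Set V) | d < (degIn G D v : ℝ)} = ↑({v ∈ J | d < (degIn G D v : ℝ)}) :=
    (J.coe_filter _).symm
  rw [hset, Set.ncard_coe_finset, le_div_iff₀ (by positivity)]
  calc (#{v ∈ J | d < (degIn G D v : ℝ)} : ℝ) * (d * ℓ * ρ ^ 2)
      = #{v ∈ J | d < (degIn G D v : ℝ)} * d * (ℓ * ρ ^ 2) := by ring
    _ ≤ r * M / #J * (2 * (ε / (ℓ * ρ ^ 2) * #J ^ 2)) * (ℓ * ρ ^ 2) :=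
        mul_le_mul_of_nonneg_right (hcount.trans (by gcongr)) (by positivity)
    _ = 2 * ε * r * M * #J := by field_simp

theorem high_degree_vertex_count [Fintype V] [DecidableEq V]
    (G : SimpleGraph V) (ε ρ ℓ r M : ℝ)
    (hε : 0 < ε) (hρ : 0 < ρ) (hℓ : ℓ ≥ 16)
    (J : Finset V) (hJne : J.Nonempty)
    (hJ : (edgesIn G J : ℝ) < ε / (ℓ * ρ ^ 2) * (J.card : ℝ) ^ 2)
    (D : Finset V) (hr : 0 < r) (hM : 0 < M)
    (hMRR : MRR G ε ρ ℓ J D ≤ r * M / J.card) :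
    ∀ d : ℝ, d ≥ ε * r * M / (Real.sqrt ℓ * ρ ^ 2) →
      ({v ∈ (J : Set V) | d < (degIn G D v : ℝ)}.ncard : ℝ) ≤
        2 * ε * r * M * J.card / (d * ℓ * ρ ^ 2) :=
  high_degree_vertex_count_general G ε ρ ℓ r M hε hρ hℓ J hJne hJ D hr hM hMRR
end

section
/- Let 0 < ε < ρ²/2 with ρ ∈ (0,1], and let G = (V,E) be a graph on n vertices (with ρn a positive integer) that is ε-far from having a ρn independent set. If C ⊆ V satisfies |E(C)| ≤ εn²/4, then |C| < (1 − ε/(2ρ²))·ρn. -/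
open Finset

variable {V : Type*}

/-!
Suppose `|C| ≥ (1 - ε/(2ρ²))ρn` and let `m = ρn`. If `|C| ≥ m`, a subset of `C` of size `m`
spans at most `εn²/4` edges. Otherwise, extend `C` to a set `U` of size `m`; every edge of `U`
not inside `C` has an endpoint among the `m - |C| ≤ εn/(2ρ)` new vertices, so
`|E(U)| ≤ εn²/4 + (εn/(2ρ))·ρn < εn²`. Either way `G` is not `ε`-far.
-/

namespace SimpleGraph

section Finite

variable [Finite V] (G : SimpleGraph V)

lemma edgesIn_mono {S T : Finset V} (h : S ⊆ T) : edgesIn G S ≤ edgesIn G T :=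
  Set.ncard_le_ncard (fun _ ⟨he, hS⟩ ↦ ⟨he, fun v hv ↦ h (hS v hv)⟩) (Set.toFinite _)

lemma edgesIn_le_edgesIn_add_card_sdiff_mul_card [DecidableEq V] (C U : Finset V) :
    edgesIn G U ≤ edgesIn G C + #(U \ C) * #U := by
  set P := ((U \ C) ×ˢ U).image (fun p : V × V ↦ s(p.1, p.2))
  have hsub : {e ∈ G.edgeSet | ∀ v ∈ e, v ∈ U} ⊆ {e ∈ G.edgeSet | ∀ v ∈ e, v ∈ C} ∪ ↑P := by
    rintro e ⟨he, hU⟩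
    by_cases hC : ∀ v ∈ e, v ∈ C
    · exact Or.inl ⟨he, hC⟩
    · obtain ⟨w, hw, hwC⟩ := not_forall₂.1 hC
      exact Or.inr (mem_image.2 ⟨(w, Sym2.Mem.other hw),
        mem_product.2 ⟨mem_sdiff.2 ⟨hU w hw, hwC⟩, hU _ (Sym2.other_mem hw)⟩, Sym2.other_spec hw⟩)
  calc edgesIn G U
      ≤ ({e ∈ G.edgeSet | ∀ v ∈ e, v ∈ C} ∪ ↑P).ncard := Set.ncard_le_ncard hsub (Set.toFinite _)
    _ ≤ edgesIn G C + #P := by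
        rw [← Set.ncard_coe_finset P]
        exact Set.ncard_union_le _ _
    _ ≤ edgesIn G C + #(U \ C) * #U := by
        gcongr
        exact card_image_le.trans (card_product _ _).le

end Finite

lemma exists_card_eq_edgesIn_le [Fintype V] (G : SimpleGraph V) (C : Finset V) {m : ℕ}
    (hm : m ≤ Fintype.card V) :
    ∃ U : Finset V, #U = m ∧ edgesIn G U ≤ edgesIn G C + (m - #C) * m := by
  classical
  rcases le_total m #C with hmC | hCm
  · obtain ⟨U, hUC, rfl⟩ := exists_subset_card_eq hmC
    exact ⟨U, rfl, (edgesIn_mono G hUC).trans le_self_add⟩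
  · obtain ⟨U, hCU, rfl⟩ := exists_superset_card_eq hCm hm
    refine ⟨U, rfl, ?_⟩
    rw [← card_sdiff_of_subset hCU]
    exact edgesIn_le_edgesIn_add_card_sdiff_mul_card G C U

end SimpleGraph

theorem sparse_set_is_small_general [Fintype V] (G : SimpleGraph V) (ε ρ : ℝ) (n : ℕ)
    (hn : n = Fintype.card V) (hε : 0 < ε) (hρ : 0 < ρ) (hρ1 : ρ ≤ 1)
    (hρn : ∃ m : ℕ, 0 < m ∧ (m : ℝ) = ρ * n)
    (hfar : FarFrom G ρ ε)
    (C : Finset V) (hC : (edgesIn G C : ℝ) ≤ ε * (n : ℝ) ^ 2 / 4) :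
    (C.card : ℝ) < (1 - ε / (2 * ρ ^ 2)) * (ρ * n) := by
  obtain ⟨m, hm0, hm⟩ := hρn
  have hmn : (m : ℝ) ≤ n := hm.trans_le (mul_le_of_le_one_left n.cast_nonneg hρ1)
  have hn0 : (0 : ℝ) < n := (Nat.cast_pos.2 hm0).trans_le hmn
  by_contra! hbig
  obtain ⟨U, hU, hEU⟩ := G.exists_card_eq_edgesIn_le C (m := m) (hn ▸ by exact_mod_cast hmn)
  have hfarU : ε * (n : ℝ) ^ 2 ≤ edgesIn G U := hn ▸ hfar U (by rw [hU, hm, hn])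
  have hEU' : (edgesIn G U : ℝ) ≤ edgesIn G C + ((m - #C : ℕ) : ℝ) * m := by exact_mod_cast hEU
  have hgap : ((m - #C : ℕ) : ℝ) * m ≤ ε * (n : ℝ) ^ 2 / 2 := by
    rcases le_total m #C with hmC | hCm
    · rw [Nat.sub_eq_zero_of_le hmC, Nat.cast_zero, zero_mul]
      positivity
    · have hdiff : ρ * n - #C ≤ ε / (2 * ρ ^ 2) * (ρ * n) := by linarith
      rw [Nat.cast_sub hCm, hm]
      calc (ρ * n - #C) * (ρ * n) ≤ ε / (2 * ρ ^ 2) * (ρ * n) * (ρ * n) := by gcongr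
        _ = ε * (n : ℝ) ^ 2 / 2 := by field_simp
  have : 0 < ε * (n : ℝ) ^ 2 := by positivity
  linarith

theorem sparse_set_is_small [Fintype V] (G : SimpleGraph V) (ε ρ : ℝ) (n : ℕ)
    (hn : n = Fintype.card V) (hε : 0 < ε) (hερ : ε < ρ ^ 2 / 2) (hρ : 0 < ρ) (hρ1 : ρ ≤ 1)
    (hρn : ∃ m : ℕ, 0 < m ∧ (m : ℝ) = ρ * n)
    (hfar : FarFrom G ρ ε)
    (C : Finset V) (hC : (edgesIn G C : ℝ) ≤ ε * (n : ℝ) ^ 2 / 4) :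
    (C.card : ℝ) < (1 - ε / (2 * ρ ^ 2)) * (ρ * n) :=
  sparse_set_is_small_general G ε ρ n hn hε hρ hρ1 hρn hfar C hC
end

section
/- Let ε > 0 and ρ ∈ (0,1] with ρn an integer satisfying ρn ≥ 2, and let G = (V,E) be a graph on n vertices that is ε-far from having a ρn independent set. Then every subset U ⊆ V with |U| ≥ ρn satisfies |E(U)| ≥ (ε/(4ρ²))·|U|². -/
open Finset

variable {V : Type*}

lemma count_supersets {α : Type*} [DecidableEq α] (U t : Finset α) (m : ℕ)
    (ht : t ⊆ U) (htm : t.card ≤ m) :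
    ((U.powersetCard m).filter (fun S => t ⊆ S)).card
      = Nat.choose (U.card - t.card) (m - t.card) := by
  rw [← Finset.card_sdiff_of_subset ht, ← Finset.card_powersetCard]
  apply Finset.card_bij (fun S _ => S \ t)
  · intro S hS
    simp only [Finset.mem_filter, Finset.mem_powersetCard] at hS
    rw [Finset.mem_powersetCard]
    exact ⟨Finset.sdiff_subset_sdiff hS.1.1 le_rfl,
      by rw [Finset.card_sdiff_of_subset hS.2, hS.1.2]⟩
  · intro S hS S' hS' h
    simp only [Finset.mem_filter, Finset.mem_powersetCard] at hS hS'
    rw [← Finset.sdiff_union_of_subset hS.2, ← Finset.sdiff_union_of_subset hS'.2, h]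
  · intro R hR
    rw [Finset.mem_powersetCard, Finset.subset_sdiff] at hR
    refine ⟨R ∪ t, ?_, Finset.union_sdiff_cancel_right hR.1.2⟩
    simp only [Finset.mem_filter, Finset.mem_powersetCard]
    refine ⟨⟨Finset.union_subset hR.1.1 ht, ?_⟩, Finset.subset_union_right⟩
    rw [Finset.card_union_of_disjoint hR.1.2, hR.2, Nat.sub_add_cancel htm]

lemma edgesIn_eq_card [Fintype V] (G : SimpleGraph V) (S : Finset V)
    [DecidablePred (fun e : Sym2 V => e ∈ G.edgeSet ∧ ∀ v ∈ e, v ∈ S)] :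
    edgesIn G S
      = (Finset.univ.filter (fun e : Sym2 V => e ∈ G.edgeSet ∧ ∀ v ∈ e, v ∈ S)).card := by
  rw [edgesIn, ← Set.ncard_coe_finset]
  congr 1
  ext e
  simp

lemma choose_identity (a b : ℕ) :
    (b + 2) * (b + 1) * Nat.choose (a + 2) (b + 2)
      = (a + 2) * (a + 1) * Nat.choose a b := by
  have h1 := Nat.add_one_mul_choose_eq (a + 1) (b + 1)
  have h2 := Nat.add_one_mul_choose_eq a b
  nlinarith [h1, h2]

set_option maxHeartbeats 1000000 in
theorem far_implies_all_large_sets_dense [Fintype V]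
    (G : SimpleGraph V) (ε ρ : ℝ) (n : ℕ)
    (hn : n = Fintype.card V) (hε : 0 < ε) (hρ : 0 < ρ) (hρ1 : ρ ≤ 1)
    (hρn : ∃ m : ℕ, 2 ≤ m ∧ (m : ℝ) = ρ * n)
    (hfar : FarFrom G ρ ε) :
    ∀ U : Finset V, (U.card : ℝ) ≥ ρ * n →
      (edgesIn G U : ℝ) ≥ ε / (4 * ρ ^ 2) * (U.card : ℝ) ^ 2 := by
  obtain ⟨m, hm2, hmρ⟩ := hρn
  intro U hU
  classical
  set u := U.card with hu
  have hmu : m ≤ u := by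
    have : (m : ℝ) ≤ (u : ℝ) := by rw [hmρ]; exact hU
    exact_mod_cast this
  have hnm : (m : ℝ) ≤ (n : ℝ) := by
    rw [hmρ]
    nlinarith [Nat.cast_nonneg (α := ℝ) n]
  have hn0 : (0 : ℝ) < n := by
    have h2m : (2 : ℝ) ≤ (m : ℝ) := by exact_mod_cast hm2
    linarith
  -- the edges inside U, as a finset
  set A : Finset (Sym2 V) :=
    Finset.univ.filter (fun e : Sym2 V => e ∈ G.edgeSet ∧ ∀ v ∈ e, v ∈ U) with hA
  have hAcard : edgesIn G U = A.card := edgesIn_eq_card G U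
  -- counting supersets of an edge
  have count : ∀ e ∈ A,
      ((U.powersetCard m).filter (fun S => ∀ v ∈ e, v ∈ S)).card
        = Nat.choose (u - 2) (m - 2) := by
    intro e he
    induction e using Sym2.inductionOn with
    | hf a b =>
      simp only [hA, Finset.mem_filter, Finset.mem_univ, true_and] at he
      obtain ⟨hadj, hmem⟩ := he
      rw [SimpleGraph.mem_edgeSet] at hadj
      have hab : a ≠ b := hadj.ne
      have ha : a ∈ U := hmem a (by simp)
      have hb : b ∈ U := hmem b (by simp)
      have hiff : ∀ S : Finset V, (∀ v ∈ s(a, b), v ∈ S) ↔ ({a, b} : Finset V) ⊆ S := by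
        intro S
        simp [Sym2.forall_mem_pair, Finset.insert_subset_iff]
      rw [Finset.filter_congr (fun S _ => by rw [hiff S])]
      have hcard2 : ({a, b} : Finset V).card = 2 := by
        rw [Finset.card_insert_of_notMem (by simpa using hab), Finset.card_singleton]
      rw [count_supersets U {a, b} m (by simp [Finset.insert_subset_iff, ha, hb])
        (by rw [hcard2]; exact hm2), hcard2]
  -- the double count
  have key : ∑ S ∈ U.powersetCard m, edgesIn G S
      = edgesIn G U * Nat.choose (u - 2) (m - 2) := by
    have hrw : ∀ S ∈ U.powersetCard m,
        edgesIn G S = (A.filter (fun e => ∀ v ∈ e, v ∈ S)).card := by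
      intro S hS
      rw [edgesIn_eq_card]
      congr 1
      ext e
      simp only [hA, Finset.mem_filter, Finset.mem_univ, true_and, and_assoc]
      constructor
      · rintro ⟨he, hv⟩
        exact ⟨he, fun v hv' => (Finset.mem_powersetCard.1 hS).1 (hv v hv'), hv⟩
      · rintro ⟨he, _, hv⟩
        exact ⟨he, hv⟩
    rw [Finset.sum_congr rfl hrw]
    have swap : ∑ S ∈ U.powersetCard m, (A.filter (fun e => ∀ v ∈ e, v ∈ S)).card
        = ∑ e ∈ A, ((U.powersetCard m).filter (fun S => ∀ v ∈ e, v ∈ S)).card := by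
      simp_rw [Finset.card_filter]
      rw [Finset.sum_comm]
    rw [swap, Finset.sum_congr rfl count, Finset.sum_const, hAcard, smul_eq_mul]
  -- lower bound on the sum
  have hlow : (Nat.choose u m : ℝ) * (ε * (n : ℝ) ^ 2)
      ≤ ∑ S ∈ U.powersetCard m, (edgesIn G S : ℝ) := by
    have hcc : (Nat.choose u m : ℝ) * (ε * (n : ℝ) ^ 2)
        = ∑ _S ∈ U.powersetCard m, ε * (n : ℝ) ^ 2 := by
      rw [Finset.sum_const, Finset.card_powersetCard, nsmul_eq_mul, hu]
    rw [hcc]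
    refine Finset.sum_le_sum fun S hS => ?_
    have hScard : (S.card : ℝ) = ρ * Fintype.card V := by
      rw [(Finset.mem_powersetCard.1 hS).2, hmρ, hn]
    have := hfar S hScard
    rw [← hn] at this
    exact this
  have keyR : ∑ S ∈ U.powersetCard m, (edgesIn G S : ℝ)
      = (edgesIn G U : ℝ) * (Nat.choose (u - 2) (m - 2) : ℝ) := by
    exact_mod_cast congrArg (Nat.cast : ℕ → ℝ) key
  -- the binomial identity, cast to ℝ
  obtain ⟨b, hb⟩ : ∃ b, m = b + 2 := ⟨m - 2, (Nat.sub_add_cancel hm2).symm⟩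
  obtain ⟨a, ha'⟩ : ∃ a, u = a + 2 := ⟨u - 2, (Nat.sub_add_cancel (hm2.trans hmu)).symm⟩
  have hid : (m : ℝ) * ((m : ℝ) - 1) * (Nat.choose u m : ℝ)
      = (u : ℝ) * ((u : ℝ) - 1) * (Nat.choose (u - 2) (m - 2) : ℝ) := by
    have h := choose_identity a b
    have h2 : u - 2 = a := by omega
    have h3 : m - 2 = b := by omega
    have hR : ((b : ℝ) + 2) * ((b : ℝ) + 1) * (Nat.choose (a + 2) (b + 2) : ℝ)
        = ((a : ℝ) + 2) * ((a : ℝ) + 1) * (Nat.choose a b : ℝ) := by exact_mod_cast h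
    rw [h2, h3, hb, ha']
    push_cast
    linear_combination hR
  -- assemble
  set E : ℝ := (edgesIn G U : ℝ) with hE
  set c2 : ℝ := (Nat.choose (u - 2) (m - 2) : ℝ) with hc2
  set c : ℝ := (Nat.choose u m : ℝ) with hc
  have hc2pos : (0 : ℝ) < c2 := by
    rw [hc2]
    exact_mod_cast Nat.choose_pos (by omega)
  have hEnn : (0 : ℝ) ≤ E := by positivity
  have h1 : c * (ε * (n : ℝ) ^ 2) ≤ E * c2 := hlow.trans (le_of_eq keyR)
  have hmR : (2 : ℝ) ≤ (m : ℝ) := by exact_mod_cast hm2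
  have huR : (m : ℝ) ≤ (u : ℝ) := by exact_mod_cast hmu
  -- u(u-1) ε n² ≤ E m(m-1)
  have step2 : (u : ℝ) * ((u : ℝ) - 1) * (ε * (n : ℝ) ^ 2) ≤ E * ((m : ℝ) * ((m : ℝ) - 1)) := by
    have h := mul_le_mul_of_nonneg_right h1 (by nlinarith : (0 : ℝ) ≤ (m : ℝ) * ((m : ℝ) - 1))
    have hL : c * (ε * (n : ℝ) ^ 2) * ((m : ℝ) * ((m : ℝ) - 1))
        = (u : ℝ) * ((u : ℝ) - 1) * (ε * (n : ℝ) ^ 2) * c2 := by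
      linear_combination (ε * (n : ℝ) ^ 2) * hid
    have hRR : E * c2 * ((m : ℝ) * ((m : ℝ) - 1))
        = E * ((m : ℝ) * ((m : ℝ) - 1)) * c2 := by ring
    rw [hL, hRR] at h
    exact le_of_mul_le_mul_right h hc2pos
  -- replace m by ρ n
  have hm2R : (m : ℝ) * ((m : ℝ) - 1) ≤ ρ ^ 2 * (n : ℝ) ^ 2 := by
    nlinarith [hmρ, hmR]
  have step3 : (u : ℝ) * ((u : ℝ) - 1) * ε ≤ E * ρ ^ 2 := by
    have h := step2.trans (mul_le_mul_of_nonneg_left hm2R hEnn)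
    have hn2 : (0 : ℝ) < (n : ℝ) ^ 2 := by positivity
    have e1 : (u : ℝ) * ((u : ℝ) - 1) * (ε * (n : ℝ) ^ 2)
        = ((u : ℝ) * ((u : ℝ) - 1) * ε) * (n : ℝ) ^ 2 := by ring
    have e2 : E * (ρ ^ 2 * (n : ℝ) ^ 2) = (E * ρ ^ 2) * (n : ℝ) ^ 2 := by ring
    rw [e1, e2] at h
    exact le_of_mul_le_mul_right h hn2
  -- finish
  rw [ge_iff_le, div_mul_eq_mul_div, div_le_iff₀ (by positivity)]
  have hu2 : (2 : ℝ) ≤ (u : ℝ) := hmR.trans huR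
  have hx : (0 : ℝ) ≤ ε * ((u : ℝ) * ((u : ℝ) - 2)) :=
    mul_nonneg hε.le (mul_nonneg (by linarith) (by linarith))
  have hy : (0 : ℝ) ≤ E * ρ ^ 2 := mul_nonneg hEnn (sq_nonneg ρ)
  nlinarith [step3, hx, hy]
end
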